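/- arXiv:2009.07028 — 2 statements merged into one kernel-verified Lean document; each statement's English description precedes it below -/
import Mathlib

section
/- Let D ≡ 0 or 1 (mod 4) be a non-square integer, d = |D|, and q₁ < q₂ < ⋯ the primes with Kronecker symbol (D/q) = -1. Let n₀ be the turning index (q₁⋯q_{n₀} < d < q₁⋯q_{n₀+1}). If either (D < 0 and n₀ is even) or (D > 0 and n₀ is odd), then q_{n₀+1} ≤ d - q₁q₂⋯q_{n₀}. -/
/-!
Let `χ` be the completely multiplicative extension of `q ↦ (D/q)`. Quadratic reciprocity
shows that `χ(d - Q) = sign(D) χ(Q)` whenever `0 < Q < d` is coprime to `d`: for `D ≡ 1 (mod 4)`,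
`χ(n)` is the Jacobi symbol `(n/d)`; for `D ≡ 0 (mod 4)`, `χ(n) = (D/n)` has period `d` on odd `n`
and `(D/(d-1)) = sign(D)`. With `Q = q₁⋯q_{n₀}` we have `χ(Q) = (-1)^{n₀}`, so the parity
hypothesis gives `χ(d - Q) = -1`. Hence `d - Q` has a prime factor `r` with `(D/r) = -1`; it does
not divide `Q` (otherwise `r ∣ d`), so `r = q_k` for some `k ≥ n₀`, and `q_{n₀+1} ≤ r ≤ d - Q`.
-/

/-- Kronecker symbol `(D/q)` at a prime `q`, for discriminants `D ≡ 0,1 (mod 4)`. -/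
def kron (D : ℤ) (q : ℕ) : ℤ :=
  if q = 2 then (if D % 8 = 1 then 1 else if D % 8 = 5 then -1 else 0)
  else jacobiSym D q

open scoped NumberTheorySymbols
open ZMod

section Kronecker

variable {D : ℤ}

theorem kron_of_ne_two (D : ℤ) {p : ℕ} (hp : p ≠ 2) : kron D p = J(D | p) := by
  simp [kron, hp]

theorem kron_trichotomy (D : ℤ) (p : ℕ) : kron D p = 0 ∨ kron D p = 1 ∨ kron D p = -1 := by
  rcases eq_or_ne p 2 with rfl | hp
  · simp only [kron, if_true]; split_ifs <;> simp
  · rw [kron_of_ne_two D hp]; exact jacobiSym.trichotomy D p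

theorem kron_eq_zero_of_dvd {p : ℕ} (hp : p.Prime) (hpD : p ∣ D.natAbs) : kron D p = 0 := by
  rcases eq_or_ne p 2 with rfl | hp2
  · simp only [kron, if_true]; rw [if_neg (by omega), if_neg (by omega)]
  · rw [kron_of_ne_two D hp2, jacobiSym.eq_zero_iff]
    exact ⟨hp.ne_zero, fun h => hp.one_lt.ne' (Nat.dvd_one.1 (h ▸ Nat.dvd_gcd hpD dvd_rfl))⟩

theorem Nat.Prime.coprime_natAbs_of_kron_eq_neg_one {p : ℕ} (hp : p.Prime) (hpD : kron D p = -1) :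
    p.Coprime D.natAbs :=
  (Nat.Prime.coprime_iff_not_dvd hp).2 fun h => by simp [kron_eq_zero_of_dvd hp h] at hpD

theorem kron_eq_jacobiSym_natAbs (hD : D % 4 = 1) {p : ℕ} (hp : p.Prime) :
    kron D p = J(p | D.natAbs) := by
  obtain ⟨d, rfl | rfl⟩ := Int.eq_nat_or_neg D
  · simp only [Int.natAbs_natCast]
    rcases eq_or_ne p 2 with rfl | hp2
    · rw [Nat.cast_two, jacobiSym.at_two (Nat.odd_iff.2 (by omega)), χ₈_nat_eq_if_mod_eight]
      rcases (by omega : d % 8 = 1 ∨ d % 8 = 5) with h | h <;> simp [kron, h] <;> omega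
    · rw [kron_of_ne_two _ hp2, jacobiSym.quadratic_reciprocity_one_mod_four (by omega)
        (hp.odd_of_ne_two hp2)]
  · simp only [Int.natAbs_neg, Int.natAbs_natCast]
    rcases eq_or_ne p 2 with rfl | hp2
    · rw [Nat.cast_two, jacobiSym.at_two (Nat.odd_iff.2 (by omega)), χ₈_nat_eq_if_mod_eight]
      rcases (by omega : d % 8 = 3 ∨ d % 8 = 7) with h | h <;> simp [kron, h] <;> omega
    · have hpo := hp.odd_of_ne_two hp2
      rw [kron_of_ne_two _ hp2, jacobiSym.neg _ hpo]
      rcases Nat.odd_mod_four_iff.1 (Nat.odd_iff.1 hpo) with h | h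
      · rw [χ₄_nat_one_mod_four h, one_mul,
          jacobiSym.quadratic_reciprocity_one_mod_four' (Nat.odd_iff.2 (by omega)) h]
      · rw [χ₄_nat_three_mod_four h, jacobiSym.quadratic_reciprocity_three_mod_four (by omega) h,
          neg_one_mul, neg_neg]

-- Junk value: `kroneckerSym D 0 = 1` (empty factorization).
def kroneckerSym (D : ℤ) (n : ℕ) : ℤ := (n.primeFactorsList.map (kron D)).prod

theorem kroneckerSym_one (D : ℤ) : kroneckerSym D 1 = 1 := by simp [kroneckerSym]

theorem kroneckerSym_prime {p : ℕ} (hp : p.Prime) : kroneckerSym D p = kron D p := by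
  simp [kroneckerSym, Nat.primeFactorsList_prime hp]

theorem kroneckerSym_mul {m n : ℕ} (hm : m ≠ 0) (hn : n ≠ 0) :
    kroneckerSym D (m * n) = kroneckerSym D m * kroneckerSym D n := by
  rw [kroneckerSym, kroneckerSym, kroneckerSym, ← List.prod_append, ← List.map_append]
  exact ((Nat.perm_primeFactorsList_mul hm hn).map _).prod_eq

theorem kroneckerSym_prod {ι : Type*} (s : Finset ι) {f : ι → ℕ} (hf : ∀ i ∈ s, f i ≠ 0) :
    kroneckerSym D (∏ i ∈ s, f i) = ∏ i ∈ s, kroneckerSym D (f i) := by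
  classical
  induction s using Finset.induction_on with
  | empty => simp [kroneckerSym_one]
  | insert a s ha ih =>
    rw [Finset.prod_insert ha, Finset.prod_insert ha,
      kroneckerSym_mul (hf a (by simp)) (Finset.prod_ne_zero_iff.2 fun i hi => hf i (by simp [hi])),
      ih fun i hi => hf i (by simp [hi])]

theorem kroneckerSym_eq_of_prime {f : ℕ → ℤ} (h1 : f 1 = 1)
    (hmul : ∀ m n, m ≠ 0 → n ≠ 0 → f (m * n) = f m * f n)
    (hprime : ∀ p, p.Prime → kron D p = f p) {n : ℕ} (hn : n ≠ 0) : kroneckerSym D n = f n := by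
  induction n using Nat.recOnMul with
  | zero => exact absurd rfl hn
  | one => rw [kroneckerSym_one, h1]
  | prime p hp => rw [kroneckerSym_prime hp, hprime p hp]
  | mul a b iha ihb =>
    have ha : a ≠ 0 := left_ne_zero_of_mul hn
    have hb : b ≠ 0 := right_ne_zero_of_mul hn
    rw [kroneckerSym_mul ha hb, hmul a b ha hb, iha ha, ihb hb]

theorem exists_prime_dvd_of_kroneckerSym_eq_neg_one {n : ℕ} (h : kroneckerSym D n = -1) :
    ∃ p, p.Prime ∧ p ∣ n ∧ kron D p = -1 := by
  by_contra! hne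
  have hvals : ∀ x ∈ n.primeFactorsList.map (kron D), x = 0 ∨ x = 1 := by
    simp only [List.mem_map]
    rintro _ ⟨p, hp, rfl⟩
    have := hne p (Nat.prime_of_mem_primeFactorsList hp) (Nat.dvd_of_mem_primeFactorsList hp)
    have := kron_trichotomy D p
    tauto
  by_cases h0 : (0 : ℤ) ∈ n.primeFactorsList.map (kron D)
  · rw [kroneckerSym, List.prod_eq_zero h0] at h
    exact absurd h (by norm_num)
  · rw [kroneckerSym, List.prod_eq_one fun x hx =>
      (hvals x hx).resolve_left fun hx0 => h0 (hx0 ▸ hx)] at h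
    exact absurd h (by norm_num)

theorem kroneckerSym_eq_jacobiSym_of_four_dvd (hD : D % 4 = 0) {n : ℕ} (hn : n ≠ 0) :
    kroneckerSym D n = J(D | n) := by
  refine kroneckerSym_eq_of_prime (jacobiSym.one_right D)
    (fun m n hm hn => jacobiSym.mul_right' D hm hn) (fun p hp => ?_) hn
  rcases eq_or_ne p 2 with rfl | hp2
  · rw [jacobiSym.mod_left, show D % ((2 : ℕ) : ℤ) = 0 by omega, jacobiSym.zero_left one_lt_two]
    simp only [kron, if_true]
    rw [if_neg (by omega), if_neg (by omega)]
  · exact kron_of_ne_two D hp2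

theorem kroneckerSym_eq_jacobiSym_natAbs (hD : D % 4 = 1) {n : ℕ} (hn : n ≠ 0) :
    kroneckerSym D n = J(n | D.natAbs) :=
  kroneckerSym_eq_of_prime (f := fun n => J(n | D.natAbs)) (jacobiSym.one_left _)
    (fun m n _ _ => by rw [Nat.cast_mul, jacobiSym.mul_left])
    (fun _ hp => kron_eq_jacobiSym_natAbs hD hp) hn

theorem jacobiSym_congr_right_of_four_dvd (hD : D % 4 = 0) {m n : ℕ} (hm : Odd m) (hn : Odd n)
    (hmn : m ≡ n [MOD D.natAbs]) : J(D | m) = J(D | n) := by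
  -- `J(D / 4 | ·)` has period `4 * |D / 4| = d` on odd numbers.
  have hd : 4 * (D / 4).natAbs = D.natAbs := by omega
  rw [← jacobiSym.div_four_left hD (Nat.odd_iff.1 hm),
    ← jacobiSym.div_four_left hD (Nat.odd_iff.1 hn), jacobiSym.mod_right _ hm,
    jacobiSym.mod_right _ hn, hd, hmn]

theorem jacobiSym_natAbs_sub_one (hD : D % 4 = 0) (hD0 : D ≠ 0) :
    J(D | D.natAbs - 1) = D.sign := by
  obtain ⟨d, rfl | rfl⟩ := Int.eq_nat_or_neg D
  all_goals
    have hd0 : d ≠ 0 := by rintro rfl; simp at hD0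
    have hdd : J(d | d - 1) = 1 := by
      have hd : (d : ℤ) = ((d - 1 : ℕ) : ℤ) + 1 := by omega
      rw [jacobiSym.mod_left, hd, Int.add_emod_left, ← jacobiSym.mod_left, jacobiSym.one_left]
  · rw [Int.natAbs_natCast, hdd, Int.sign_natCast_of_ne_zero hd0]
  · rw [Int.natAbs_neg, Int.natAbs_natCast, jacobiSym.neg _ (Nat.odd_iff.2 (by omega)), hdd,
      χ₄_nat_three_mod_four (by omega), Int.sign_neg, Int.sign_natCast_of_ne_zero hd0, mul_one]

theorem jacobiSym_natAbs_sub_of_four_dvd (hD : D % 4 = 0) (hD0 : D ≠ 0) {Q : ℕ}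
    (hQ : Q < D.natAbs) (hcop : Q.Coprime D.natAbs) :
    J(D | D.natAbs - Q) = D.sign * J(D | Q) := by
  have hQodd : Odd Q :=
    Nat.coprime_two_left.1 (hcop.coprime_dvd_right (by omega : 2 ∣ D.natAbs)).symm
  have hmodd : Odd (D.natAbs - Q) := by rw [Nat.odd_iff] at hQodd ⊢; omega
  have hsq : J(D | Q) ^ 2 = 1 := jacobiSym.sq_one hcop.symm
  -- `(d - Q) Q ≡ -Q² ≡ (d - 1) Q² (mod d)`
  have hcongr : (D.natAbs - Q) * Q ≡ (D.natAbs - 1) * Q ^ 2 [MOD D.natAbs] := by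
    rw [Nat.modEq_iff_dvd]
    refine ⟨Q * (Q - 1), ?_⟩
    push_cast [Nat.cast_sub hQ.le, Nat.cast_sub (by omega : 1 ≤ D.natAbs)]
    ring
  have key : J(D | D.natAbs - Q) * J(D | Q) = D.sign := by
    have hodd : Odd ((D.natAbs - 1) * Q ^ 2) :=
      (Nat.odd_iff.2 (by omega) : Odd (D.natAbs - 1)).mul (hQodd.pow)
    rw [← jacobiSym.mul_right' D hmodd.pos.ne' hQodd.pos.ne',
      jacobiSym_congr_right_of_four_dvd hD (hmodd.mul hQodd) hodd hcongr,
      jacobiSym.mul_right' D (by omega) (pow_ne_zero 2 hQodd.pos.ne'), jacobiSym.pow_right, hsq,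
      mul_one, jacobiSym_natAbs_sub_one hD hD0]
  linear_combination J(D | Q) * key - J(D | D.natAbs - Q) * hsq

theorem kroneckerSym_natAbs_sub_of_odd (hD : D % 4 = 1) {Q : ℕ} (hQ0 : Q ≠ 0)
    (hQ : Q < D.natAbs) : kroneckerSym D (D.natAbs - Q) = D.sign * kroneckerSym D Q := by
  have hdodd : Odd D.natAbs := Nat.odd_iff.2 (by omega)
  have hmod : ((D.natAbs - Q : ℕ) : ℤ) % D.natAbs = -(Q : ℤ) % D.natAbs := by
    rw [Nat.cast_sub hQ.le, sub_eq_neg_add, Int.add_emod_right]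
  have hsign : χ₄ D.natAbs = D.sign := by
    obtain ⟨d, rfl | rfl⟩ := Int.eq_nat_or_neg D
    · rw [Int.natAbs_natCast, χ₄_nat_one_mod_four (by omega),
        Int.sign_natCast_of_ne_zero (by omega)]
    · rw [Int.natAbs_neg, Int.natAbs_natCast, χ₄_nat_three_mod_four (by omega), Int.sign_neg,
        Int.sign_natCast_of_ne_zero (by omega)]
  rw [kroneckerSym_eq_jacobiSym_natAbs hD (by omega), kroneckerSym_eq_jacobiSym_natAbs hD hQ0,
    jacobiSym.mod_left' hmod, jacobiSym.neg _ hdodd, hsign]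

theorem kroneckerSym_natAbs_sub (hD : D % 4 = 0 ∨ D % 4 = 1) (hD0 : D ≠ 0) {Q : ℕ}
    (hQ0 : Q ≠ 0) (hQ : Q < D.natAbs) (hcop : Q.Coprime D.natAbs) :
    kroneckerSym D (D.natAbs - Q) = D.sign * kroneckerSym D Q := by
  rcases hD with hD | hD
  · rw [kroneckerSym_eq_jacobiSym_of_four_dvd hD (by omega),
      kroneckerSym_eq_jacobiSym_of_four_dvd hD hQ0,
      jacobiSym_natAbs_sub_of_four_dvd hD hD0 hQ hcop]
  · exact kroneckerSym_natAbs_sub_of_odd hD hQ0 hQ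

end Kronecker

theorem Nat.nth_le_of_forall_lt_ne {p : ℕ → Prop} {n r : ℕ} (hr : p r)
    (hne : ∀ j < n, Nat.nth p j ≠ r) : Nat.nth p n ≤ r := by
  classical
  have hn : n ≤ Nat.count p r := not_lt.1 fun h => hne _ h (Nat.nth_count hr)
  exact (Nat.nth_le_nth' hn fun hf => Nat.count_lt_card hf hr).trans_eq (Nat.nth_count hr)

theorem stmt11_general (D : ℤ) (hD : D % 4 = 0 ∨ D % 4 = 1) (hns : ¬ IsSquare D)
    (d : ℕ) (hd : d = D.natAbs) (n₀ : ℕ)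
    (hlt : (∏ j ∈ Finset.range n₀, Nat.nth (fun q => q.Prime ∧ kron D q = -1) j) < d)
    (hgt : d < ∏ j ∈ Finset.range (n₀ + 1), Nat.nth (fun q => q.Prime ∧ kron D q = -1) j)
    (hpar : (D < 0 ∧ Even n₀) ∨ (0 < D ∧ Odd n₀)) :
    Nat.nth (fun q => q.Prime ∧ kron D q = -1) n₀ ≤
      d - ∏ j ∈ Finset.range n₀, Nat.nth (fun q => q.Prime ∧ kron D q = -1) j := by
  set P : ℕ → Prop := fun q => q.Prime ∧ kron D q = -1
  set Q := ∏ j ∈ Finset.range n₀, Nat.nth P j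
  subst hd
  have hD0 : D ≠ 0 := by rintro rfl; exact hns ⟨0, rfl⟩
  have hQmem : ∀ j ∈ Finset.range n₀, P (Nat.nth P j) := fun j hj =>
    Nat.nth_mem_of_ne_zero <| Finset.prod_ne_zero_iff.1 (Nat.zero_le _ |>.trans_lt hgt).ne' j <|
      Finset.range_subset_range.2 n₀.le_succ hj
  have hQ0 : Q ≠ 0 := Finset.prod_ne_zero_iff.2 fun j hj => (hQmem j hj).1.ne_zero
  have hcop : Q.Coprime D.natAbs := Nat.Coprime.prod_left fun j hj =>
    (hQmem j hj).1.coprime_natAbs_of_kron_eq_neg_one (hQmem j hj).2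
  have hQ : kroneckerSym D Q = (-1) ^ n₀ := by
    rw [kroneckerSym_prod _ fun j hj => (hQmem j hj).1.ne_zero,
      Finset.prod_congr rfl fun j hj => (kroneckerSym_prime (hQmem j hj).1).trans (hQmem j hj).2,
      Finset.prod_const, Finset.card_range]
  have hm : kroneckerSym D (D.natAbs - Q) = -1 := by
    rw [kroneckerSym_natAbs_sub hD hD0 hQ0 hlt hcop, hQ]
    rcases hpar with ⟨hneg, heven⟩ | ⟨hpos, hodd⟩
    · rw [Int.sign_eq_neg_one_of_neg hneg, heven.neg_one_pow, mul_one]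
    · rw [Int.sign_eq_one_of_pos hpos, hodd.neg_one_pow, one_mul]
  obtain ⟨r, hr, hrm, hrD⟩ := exists_prime_dvd_of_kroneckerSym_eq_neg_one hm
  have hrQ : ¬ r ∣ Q := fun hrQ => hr.one_lt.ne' <| Nat.eq_one_of_dvd_coprimes hcop hrQ <| by
    simpa [Nat.sub_add_cancel hlt.le] using dvd_add hrm hrQ
  calc Nat.nth P n₀ ≤ r := Nat.nth_le_of_forall_lt_ne ⟨hr, hrD⟩ fun j hj hjr =>
        hrQ (hjr ▸ Finset.dvd_prod_of_mem _ (Finset.mem_range.2 hj))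
    _ ≤ D.natAbs - Q := Nat.le_of_dvd (by omega) hrm

theorem stmt11 (D : ℤ) (hD : D % 4 = 0 ∨ D % 4 = 1) (hns : ¬ IsSquare D)
    (d : ℕ) (hd : d = D.natAbs) (n₀ : ℕ) (hn₀ : 1 ≤ n₀)
    (hlt : (∏ j ∈ Finset.range n₀, Nat.nth (fun q => q.Prime ∧ kron D q = -1) j) < d)
    (hgt : d < ∏ j ∈ Finset.range (n₀ + 1), Nat.nth (fun q => q.Prime ∧ kron D q = -1) j)
    (hpar : (D < 0 ∧ Even n₀) ∨ (0 < D ∧ Odd n₀)) :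
    Nat.nth (fun q => q.Prime ∧ kron D q = -1) n₀ ≤
      d - ∏ j ∈ Finset.range n₀, Nat.nth (fun q => q.Prime ∧ kron D q = -1) j :=
  stmt11_general D hD hns d hd n₀ hlt hgt hpar
end

section
/- Let D ≡ 0 or 1 (mod 4) be a non-square integer, and let q₁ < q₂ < ⋯ be all primes with Kronecker symbol (D/q) = -1. If n₀ is the turning index of D and n₀ is even, then for all i ≥ n₀ + 1 one has |D| + q_{i+1} ≤ q₁q₂⋯q_i; in particular q_{i+1} < q₁q₂⋯q_i. -/
open Finset

/-- The Kronecker symbol `(D/m)` for `m ≥ 1`; its junk value at `m = 0` is `1`. -/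
def kronSymbol (D : ℤ) (m : ℕ) : ℤ :=
  (m.primeFactorsList.map (kron D)).prod

/-- Membership in `P(D)`, the primes inert in `ℚ(√D)`. -/
def IsInert (D : ℤ) (q : ℕ) : Prop :=
  q.Prime ∧ kron D q = -1

lemma Nat.nth_le_of_forall_ne {p : ℕ → Prop} {i x : ℕ} (hx : p x)
    (hne : ∀ j < i, Nat.nth p j ≠ x) : Nat.nth p i ≤ x := by
  obtain ⟨n, hn, rfl⟩ := Nat.exists_lt_card_nth_eq hx
  exact Nat.nth_le_nth' (not_lt.mp fun h => hne n h rfl) hn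

lemma jacobiSym_eq_zero_of_prime_dvd {D : ℤ} {p : ℕ} (hp : p.Prime) (h : (p : ℤ) ∣ D) :
    jacobiSym D p = 0 := by
  rw [jacobiSym.mod_left, Int.emod_eq_zero_of_dvd h, jacobiSym.zero_left hp.one_lt]

lemma kron_eq_zero_or_one_or_neg_one (D : ℤ) (q : ℕ) :
    kron D q = 0 ∨ kron D q = 1 ∨ kron D q = -1 := by
  unfold kron
  split_ifs
  all_goals first | tauto | exact jacobiSym.trichotomy D q

section Kronecker

variable {D : ℤ}

lemma kron_two_of_two_dvd (h : (2 : ℤ) ∣ D) : kron D 2 = 0 := by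
  simp only [kron, if_true]
  split_ifs <;> omega

lemma kron_of_ne_two_s12 {q : ℕ} (hq : q ≠ 2) : kron D q = jacobiSym D q :=
  if_neg hq

lemma kron_eq_jacobiSym_of_mod_four_eq_zero (hD : D % 4 = 0) {p : ℕ} (hp : p.Prime) :
    kron D p = jacobiSym D p := by
  rcases eq_or_ne p 2 with rfl | hp2
  · rw [kron_two_of_two_dvd (by omega), jacobiSym_eq_zero_of_prime_dvd hp (by push_cast; omega)]
  · exact kron_of_ne_two_s12 hp2

lemma kron_eq_jacobiSym_natAbs_of_mod_four_eq_one (hD : D % 4 = 1) {p : ℕ} (hp : p.Prime) :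
    kron D p = jacobiSym p D.natAbs := by
  obtain ⟨d, rfl | rfl⟩ : ∃ d : ℕ, D = d ∨ D = -d := ⟨D.natAbs, Int.natAbs_eq D⟩
  all_goals
    simp only [Int.natAbs_neg, Int.natAbs_natCast]
    have hd : Odd d := Nat.odd_iff.mpr (by omega)
    rcases eq_or_ne p 2 with rfl | hp2
    · rw [Nat.cast_ofNat, jacobiSym.at_two hd, ZMod.χ₈_nat_eq_if_mod_eight]
      simp only [kron, if_true]
      split_ifs <;> omega
    have hpo := hp.odd_of_ne_two hp2
    rw [kron_of_ne_two_s12 hp2]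
  · exact jacobiSym.quadratic_reciprocity_one_mod_four (by omega) hpo
  · rw [jacobiSym.neg _ hpo]
    rcases Nat.odd_mod_four_iff.mp (Nat.odd_iff.mp hpo) with hp4 | hp4
    · rw [ZMod.χ₄_nat_one_mod_four hp4, one_mul,
        jacobiSym.quadratic_reciprocity_one_mod_four' hd hp4]
    · rw [ZMod.χ₄_nat_three_mod_four hp4,
        jacobiSym.quadratic_reciprocity_three_mod_four (by omega) hp4, neg_one_mul, neg_neg]

lemma IsInert.not_dvd {p : ℕ} (h : IsInert D p) : ¬ p ∣ D.natAbs := by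
  intro hdvd
  have hpD : (p : ℤ) ∣ D := Int.ofNat_dvd_left.mpr hdvd
  have hzero : kron D p = 0 := by
    rcases eq_or_ne p 2 with rfl | hp2
    · exact kron_two_of_two_dvd (by exact_mod_cast hpD)
    · rw [kron_of_ne_two_s12 hp2, jacobiSym_eq_zero_of_prime_dvd h.1 hpD]
  exact absurd (h.2.symm.trans hzero) (by norm_num)

lemma IsInert.odd {p : ℕ} (h : IsInert D p) (h2 : (2 : ℤ) ∣ D) : Odd p :=
  h.1.odd_of_ne_two fun hp => h.not_dvd (hp ▸ Int.ofNat_dvd_left.mp h2)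

lemma kronSymbol_mul {a b : ℕ} (ha : a ≠ 0) (hb : b ≠ 0) :
    kronSymbol D (a * b) = kronSymbol D a * kronSymbol D b := by
  simp only [kronSymbol, ((Nat.perm_primeFactorsList_mul ha hb).map _).prod_eq, List.map_append,
    List.prod_append]

lemma kronSymbol_prime {p : ℕ} (hp : p.Prime) : kronSymbol D p = kron D p := by
  simp [kronSymbol, Nat.primeFactorsList_prime hp]

lemma kronSymbol_eq_jacobiSym (hD : D % 4 = 0) {m : ℕ} (hm : m ≠ 0) :
    kronSymbol D m = jacobiSym D m := by
  conv_rhs => rw [← Nat.prod_primeFactorsList hm]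
  rw [jacobiSym.list_prod_right fun p hp => (Nat.prime_of_mem_primeFactorsList hp).ne_zero]
  exact congrArg List.prod <| List.map_congr_left fun p hp =>
    kron_eq_jacobiSym_of_mod_four_eq_zero hD (Nat.prime_of_mem_primeFactorsList hp)

lemma kronSymbol_eq_jacobiSym_natAbs (hD : D % 4 = 1) {m : ℕ} (hm : m ≠ 0) :
    kronSymbol D m = jacobiSym m D.natAbs := by
  conv_rhs => rw [← Nat.prod_primeFactorsList hm]
  rw [Nat.cast_list_prod, jacobiSym.list_prod_left, List.map_map]
  exact congrArg List.prod <| List.map_congr_left fun p hp =>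
    kron_eq_jacobiSym_natAbs_of_mod_four_eq_one hD (Nat.prime_of_mem_primeFactorsList hp)

lemma kronSymbol_congr (hD : D % 4 = 0 ∨ D % 4 = 1) {m m' : ℕ} (hm : m ≠ 0) (hm' : m' ≠ 0)
    (hodd : (2 : ℤ) ∣ D → Odd m) (h : m ≡ m' [MOD D.natAbs]) :
    kronSymbol D m = kronSymbol D m' := by
  rcases hD with hD | hD
  · have hmo := hodd (by omega)
    have hm'o : Odd m' := by
      have h2 : m % 2 = m' % 2 := h.of_dvd (by omega)
      rw [Nat.odd_iff] at hmo ⊢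
      omega
    -- `J(D | ·) = J(D / 4 | ·)` on odd numbers, and the latter has period `4 |D / 4| = |D|`
    have hperiod : ∀ n : ℕ, Odd n → jacobiSym D n = jacobiSym (D / 4) (n % D.natAbs) :=
      fun n hn => by
        rw [← jacobiSym.div_four_left hD (Nat.odd_iff.mp hn), jacobiSym.mod_right _ hn,
          show 4 * (D / 4).natAbs = D.natAbs by omega]
    rw [kronSymbol_eq_jacobiSym hD hm, kronSymbol_eq_jacobiSym hD hm', hperiod m hmo,
      hperiod m' hm'o, show m % D.natAbs = m' % D.natAbs from h]
  · rw [kronSymbol_eq_jacobiSym_natAbs hD hm, kronSymbol_eq_jacobiSym_natAbs hD hm']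
    exact jacobiSym.mod_left' (by exact_mod_cast h)

lemma kronSymbol_prod_of_isInert {ι : Type*} {s : Finset ι} {f : ι → ℕ}
    (hf : ∀ j ∈ s, IsInert D (f j)) : kronSymbol D (∏ j ∈ s, f j) = (-1) ^ #s := by
  induction s using Finset.cons_induction with
  | empty => simp [kronSymbol]
  | cons a s ha ih =>
    have hs : ∀ j ∈ s, IsInert D (f j) := fun j hj => hf j (mem_cons_of_mem hj)
    have ha' := hf a (mem_cons_self a s)
    rw [prod_cons, card_cons, kronSymbol_mul ha'.1.ne_zero
      (prod_ne_zero_iff.mpr fun j hj => (hs j hj).1.ne_zero), kronSymbol_prime ha'.1, ha'.2,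
      ih hs, pow_succ, mul_comm]

lemma exists_isInert_dvd_of_kronSymbol_eq_neg_one {N : ℕ} (h : kronSymbol D N = -1) :
    ∃ p, IsInert D p ∧ p ∣ N := by
  by_contra! hN
  have hnonneg : 0 ≤ kronSymbol D N := List.prod_nonneg fun x hx => by
    obtain ⟨p, hp, rfl⟩ := List.mem_map.mp hx
    rcases kron_eq_zero_or_one_or_neg_one D p with h0 | h1 | h2
    · rw [h0]
    · rw [h1]; exact zero_le_one
    · exact absurd (Nat.dvd_of_mem_primeFactorsList hp)
        (hN p ⟨Nat.prime_of_mem_primeFactorsList hp, h2⟩)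
  omega

lemma exists_isInert_dvd_of_modEq_prod (hD : D % 4 = 0 ∨ D % 4 = 1) {ι : Type*}
    {s : Finset ι} {f : ι → ℕ} (hs : Odd #s) (hf : ∀ j ∈ s, IsInert D (f j)) {m : ℕ}
    (hm : m ≠ 0) (h : ∏ j ∈ s, f j ≡ m [MOD D.natAbs]) : ∃ p, IsInert D p ∧ p ∣ m := by
  apply exists_isInert_dvd_of_kronSymbol_eq_neg_one
  rw [← kronSymbol_congr hD (prod_ne_zero_iff.mpr fun j hj => (hf j hj).1.ne_zero) hm
    (fun h2 => ?_) h, kronSymbol_prod_of_isInert hf, hs.neg_one_pow]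
  exact prod_induction _ Odd (fun _ _ => Odd.mul) odd_one fun j hj => (hf j hj).odd h2

lemma exists_isInert_dvd_prod_sub (hD : D % 4 = 0 ∨ D % 4 = 1) {ι : Type*} {s : Finset ι}
    {f : ι → ℕ} (hs : Odd #s) (hf : ∀ j ∈ s, IsInert D (f j))
    (hlt : D.natAbs < ∏ j ∈ s, f j) :
    ∃ p, IsInert D p ∧ p ∣ ∏ j ∈ s, f j - D.natAbs ∧ (∀ j ∈ s, f j ≠ p) ∧
      D.natAbs + p ≤ ∏ j ∈ s, f j := by
  set P := ∏ j ∈ s, f j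
  have hmod : P ≡ P - D.natAbs [MOD D.natAbs] := by
    unfold Nat.ModEq
    conv_lhs => rw [← Nat.sub_add_cancel hlt.le]
    exact Nat.add_mod_right _ _
  obtain ⟨p, hp, hpP⟩ := exists_isInert_dvd_of_modEq_prod hD hs hf (by omega) hmod
  refine ⟨p, hp, hpP, fun j hj hjp => hp.not_dvd ?_, ?_⟩
  · have hdvd := Nat.dvd_sub (hjp ▸ dvd_prod_of_mem f hj) hpP
    rwa [Nat.sub_sub_self hlt.le] at hdvd
  · have := Nat.le_of_dvd (by omega) hpP
    omega

lemma exists_isInert_ne_add_le_mul_prod (hD : D % 4 = 0 ∨ D % 4 = 1) {ι : Type*}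
    {s : Finset ι} {f : ι → ℕ} (hs : Odd #s) (hf : ∀ j ∈ s, IsInert D (f j)) {q : ℕ}
    (hq : IsInert D q) (hfq : ∀ j ∈ s, f j ≠ q)
    (hbig : D.natAbs * (q + 1) + ∏ j ∈ s, f j ≤ q * ∏ j ∈ s, f j) :
    ∃ p, IsInert D p ∧ p ≠ q ∧ (∀ j ∈ s, f j ≠ p) ∧ D.natAbs + p ≤ q * ∏ j ∈ s, f j := by
  set B := ∏ j ∈ s, f j
  set d := D.natAbs
  have hB : d < B := by
    have : 0 < B := prod_pos fun j hj => (hf j hj).1.pos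
    nlinarith
  by_cases hqB : q ∣ B - d
  · have hqB' : ¬ q ∣ B := fun h => hq.not_dvd <| by
      have hdvd := Nat.dvd_sub h hqB
      rwa [Nat.sub_sub_self hB.le] at hdvd
    obtain ⟨p, hp, hpB⟩ := exists_isInert_dvd_of_modEq_prod hD hs hf (m := B + d * q)
      (by omega) (Nat.add_mul_mod_self_left B d q).symm
    refine ⟨p, hp, ?_, fun j hj hjp => ?_, ?_⟩
    · rintro rfl
      exact hqB' ((Nat.dvd_add_left (dvd_mul_left p d)).mp hpB)
    · have hpdq : p ∣ d * q := (Nat.dvd_add_right (hjp ▸ dvd_prod_of_mem f hj)).mp hpB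
      rcases hp.1.dvd_mul.mp hpdq with h | h
      · exact hp.not_dvd h
      · exact hfq j hj (hjp.trans ((Nat.prime_dvd_prime_iff_eq hp.1 hq.1).mp h))
    · have := Nat.le_of_dvd (by omega) hpB
      linarith
  · obtain ⟨p, hp, hpB, hfp, hle⟩ := exists_isInert_dvd_prod_sub hD hs hf hB
    exact ⟨p, hp, by rintro rfl; exact hqB hpB, hfp, hle.trans (Nat.le_mul_of_pos_left B hq.1.pos)⟩

end Kronecker

lemma mul_succ_add_prod_Ico_le {q : ℕ → ℕ} {d n i : ℕ} (hq : ∀ j < i, (q j).Prime)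
    (hmono : ∀ j k, j < k → k < i → q j < q k) (hn : 2 ≤ n) (hi : n + 2 ≤ i)
    (hd : d < ∏ j ∈ range (n + 1), q j) :
    d * (q 0 + 1) + ∏ j ∈ Ico 1 i, q j ≤ q 0 * ∏ j ∈ Ico 1 i, q j := by
  rw [prod_range_eq_mul_Ico _ (by omega)] at hd
  set R := ∏ j ∈ Ico 1 (n + 1), q j
  have hBR : R * q (n + 1) ≤ ∏ j ∈ Ico 1 i, q j := by
    rw [← prod_Ico_succ_top (by omega)]
    exact prod_le_prod_of_subset_of_one_le' (Ico_subset_Ico_right (by omega))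
      fun j hj _ => (hq j (mem_Ico.mp hj).2).one_lt.le
  have hR : 0 < R := prod_pos fun j hj => (hq j (by simp at hj; omega)).pos
  have hq0 : 2 ≤ q 0 := (hq 0 (by omega)).two_le
  -- `q 2 < q 3` are odd primes, so `q 3 ≥ q 0 + 4`
  have hgap : q 0 + 4 ≤ q (n + 1) := by
    have hodd : ∀ j, 0 < j → j < i → q j % 2 = 1 := fun j hj0 hji =>
      Nat.odd_iff.mp <| (hq j hji).odd_of_ne_two (by have := hmono 0 j hj0 hji; omega)
    have h01 := hmono 0 1 (by omega) (by omega)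
    have h12 := hmono 1 2 (by omega) (by omega)
    have h23 := hmono 2 3 (by omega) (by omega)
    have h3 : q 3 ≤ q (n + 1) := by
      rcases (show 3 ≤ n + 1 by omega).eq_or_lt with h | h
      · rw [h]
      · exact (hmono 3 (n + 1) h (by omega)).le
    have := hodd 2 (by omega) (by omega)
    have := hodd 3 (by omega) (by omega)
    omega
  have hB : R * (q 0 + 4) ≤ ∏ j ∈ Ico 1 i, q j := le_trans (Nat.mul_le_mul_left R hgap) hBR
  nlinarith

lemma exists_isInert_ne_nth_add_le_prod {D : ℤ} (hD : D % 4 = 0 ∨ D % 4 = 1) {n₀ i : ℕ}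
    (hn₀ : 1 ≤ n₀) (heven : Even n₀)
    (hgt : D.natAbs < ∏ j ∈ range (n₀ + 1), Nat.nth (IsInert D) j) (hi : n₀ + 1 ≤ i)
    (hcard : ∀ hf : (Set.ofPred (IsInert D)).Finite, i ≤ #hf.toFinset) :
    ∃ p, IsInert D p ∧ (∀ j < i, Nat.nth (IsInert D) j ≠ p) ∧
      D.natAbs + p ≤ ∏ j ∈ range i, Nat.nth (IsInert D) j := by
  set q := Nat.nth (IsInert D)
  have hmem : ∀ j < i, IsInert D (q j) := fun j hj =>
    Nat.nth_mem j fun hf => hj.trans_le (hcard hf)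
  have hmono : ∀ j k, j < k → k < i → q j < q k := fun j k hjk hk =>
    Nat.nth_lt_nth' hjk fun hf => hk.trans_le (hcard hf)
  rcases Nat.even_or_odd i with hie | hio
  · have hi2 : n₀ + 2 ≤ i := by
      rw [Nat.even_iff] at heven hie
      omega
    have hs : Odd #(Ico 1 i) := by
      rw [Nat.card_Ico, Nat.odd_iff]
      rw [Nat.even_iff] at hie
      omega
    rw [prod_range_eq_mul_Ico _ (by omega)]
    obtain ⟨p, hp, hp0, hfp, hle⟩ := exists_isInert_ne_add_le_mul_prod hD hs
      (fun j hj => hmem j (mem_Ico.mp hj).2) (hmem 0 (by omega))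
      (fun j hj => (hmono 0 j (mem_Ico.mp hj).1 (mem_Ico.mp hj).2).ne')
      (mul_succ_add_prod_Ico_le (fun j hj => (hmem j hj).1) hmono
        (by rw [Nat.even_iff] at heven; omega) hi2 hgt)
    refine ⟨p, hp, fun j hj => ?_, hle⟩
    rcases j.eq_zero_or_pos with rfl | hj0
    · exact hp0.symm
    · exact hfp j (mem_Ico.mpr ⟨hj0, hj⟩)
  · have hQ : ∏ j ∈ range (n₀ + 1), q j ≤ ∏ j ∈ range i, q j :=
      prod_le_prod_of_subset_of_one_le' (range_subset_range.mpr hi)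
        fun j hj _ => (hmem j (mem_range.mp hj)).1.one_lt.le
    obtain ⟨p, hp, -, hfp, hle⟩ := exists_isInert_dvd_prod_sub hD (s := range i)
      (by rwa [card_range]) (fun j hj => hmem j (mem_range.mp hj)) (hgt.trans_le hQ)
    exact ⟨p, hp, fun j hj => hfp j (mem_range.mpr hj), hle⟩

lemma infinite_setOf_isInert {D : ℤ} (hD : D % 4 = 0 ∨ D % 4 = 1) {n₀ : ℕ} (hn₀ : 1 ≤ n₀)
    (heven : Even n₀) (hgt : D.natAbs < ∏ j ∈ range (n₀ + 1), Nat.nth (IsInert D) j) :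
    (Set.ofPred (IsInert D)).Infinite := by
  intro hf
  have hcard : n₀ + 1 ≤ #hf.toFinset := by
    by_contra! h
    rw [prod_range_succ, Nat.nth_of_card_le hf (by omega), mul_zero] at hgt
    exact Nat.not_lt_zero _ hgt
  obtain ⟨p, hp, hne, -⟩ :=
    exists_isInert_ne_nth_add_le_prod hD hn₀ heven hgt hcard fun _ => le_rfl
  obtain ⟨n, hn, rfl⟩ := Nat.exists_lt_card_nth_eq hp
  exact hne n (hn hf) rfl

theorem stmt12_general (D : ℤ) (hD : D % 4 = 0 ∨ D % 4 = 1)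
    (d : ℕ) (hd : d = D.natAbs) (n₀ : ℕ) (hn₀ : 1 ≤ n₀)
    (hgt : d < ∏ j ∈ Finset.range (n₀ + 1), Nat.nth (fun q => q.Prime ∧ kron D q = -1) j)
    (heven : Even n₀) :
    ∀ i : ℕ, n₀ + 1 ≤ i →
      d + Nat.nth (fun q => q.Prime ∧ kron D q = -1) i ≤
        ∏ j ∈ Finset.range i, Nat.nth (fun q => q.Prime ∧ kron D q = -1) j := by
  subst hd
  intro i hi
  obtain ⟨p, hp, hne, hle⟩ := exists_isInert_ne_nth_add_le_prod hD hn₀ heven hgt hi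
    fun hf => absurd hf (infinite_setOf_isInert hD hn₀ heven hgt)
  exact (Nat.add_le_add_left (Nat.nth_le_of_forall_ne hp hne) _).trans hle

theorem stmt12 (D : ℤ) (hD : D % 4 = 0 ∨ D % 4 = 1) (hns : ¬ IsSquare D)
    (d : ℕ) (hd : d = D.natAbs) (n₀ : ℕ) (hn₀ : 1 ≤ n₀)
    (hlt : (∏ j ∈ Finset.range n₀, Nat.nth (fun q => q.Prime ∧ kron D q = -1) j) < d)
    (hgt : d < ∏ j ∈ Finset.range (n₀ + 1), Nat.nth (fun q => q.Prime ∧ kron D q = -1) j)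
    (heven : Even n₀) :
    ∀ i : ℕ, n₀ + 1 ≤ i →
      d + Nat.nth (fun q => q.Prime ∧ kron D q = -1) i ≤
        ∏ j ∈ Finset.range i, Nat.nth (fun q => q.Prime ∧ kron D q = -1) j :=
  stmt12_general D hD d hd n₀ hn₀ hgt heven
end
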